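/- arXiv:1507.06766 — 4 statements merged into one kernel-verified Lean document; each statement's English description precedes it below -/
import Mathlib

section
/- Conserved quantity of the linearized equation: let v : ℝ × ℝ → ℂ be jointly smooth, such that for each t the function x ↦ v(x,t) is a Schwartz function, such that t ↦ v(·,t) is a C¹ curve in Schwartz space, and such that v solves the NLS equation linearized at the Peregrine breather, i v_t + v_xx + 4|u_Per|² v + 2 u_Per² v̄ = 0. Then the quantity M(t) = ∫_ℝ (u_Per(x,t) v̄(x,t) + ū_Per(x,t) v(x,t)) dx is independent of t. -/
open MeasureTheory

/-- The Peregrine breather solution of the focusing NLS equation. -/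
noncomputable def uPer (x t : ℝ) : ℂ :=
  (1 - 4 * (1 + 4 * Complex.I * (t : ℂ)) / (1 + 4 * (x : ℂ) ^ 2 + 16 * (t : ℂ) ^ 2)) *
    Complex.exp (2 * Complex.I * (t : ℂ))

namespace PeregrineAux

open Complex Filter SchwartzMap

noncomputable def dd (x t : ℝ) : ℂ := 1 + 4 * (x : ℂ) ^ 2 + 16 * (t : ℂ) ^ 2

lemma dd_eq (x t : ℝ) : dd x t = ((1 + 4 * x ^ 2 + 16 * t ^ 2 : ℝ) : ℂ) := by simp [dd]

lemma dd_re_pos (x t : ℝ) : (0:ℝ) < 1 + 4 * x ^ 2 + 16 * t ^ 2 := by positivity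

lemma dd_ne (x t : ℝ) : dd x t ≠ 0 := by
  rw [dd_eq]; exact_mod_cast (dd_re_pos x t).ne'

noncomputable def uX (x t : ℝ) : ℂ :=
  (32 * (1 + 4 * Complex.I * (t:ℂ)) * (x:ℂ) / (dd x t) ^ 2) * Complex.exp (2 * Complex.I * (t:ℂ))

noncomputable def uXX (x t : ℝ) : ℂ :=
  (32 * (1 + 4 * Complex.I * (t:ℂ)) / (dd x t) ^ 2
    - 512 * (1 + 4 * Complex.I * (t:ℂ)) * (x:ℂ)^2 / (dd x t) ^ 3) * Complex.exp (2 * Complex.I * (t:ℂ))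

noncomputable def uT (x t : ℝ) : ℂ :=
  ((-16 * Complex.I) / dd x t + 128 * (1 + 4 * Complex.I * (t:ℂ)) * (t:ℂ) / (dd x t) ^ 2
    + (1 - 4 * (1 + 4 * Complex.I * (t:ℂ)) / dd x t) * (2 * Complex.I)) * Complex.exp (2 * Complex.I * (t:ℂ))

lemma hasDerivAt_uPer_x (t x : ℝ) : HasDerivAt (fun y : ℝ => uPer y t) (uX x t) x := by
  have hden : HasDerivAt (fun z : ℂ => 1 + 4 * z ^ 2 + 16 * (t:ℂ) ^ 2) (8 * (x:ℂ)) (x:ℂ) := by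
    have h := (((hasDerivAt_pow 2 (x:ℂ)).const_mul (4:ℂ)).const_add 1).add_const (16 * (t:ℂ) ^ 2)
    exact h.congr_deriv (by norm_num; ring)
  have hne : (1 + 4 * (x:ℂ) ^ 2 + 16 * (t:ℂ) ^ 2) ≠ 0 := dd_ne x t
  have hdiv : HasDerivAt (fun z : ℂ => 4 * (1 + 4 * Complex.I * (t:ℂ)) / (1 + 4 * z ^ 2 + 16 * (t:ℂ) ^ 2))
      ((0 * (1 + 4 * (x:ℂ) ^ 2 + 16 * (t:ℂ) ^ 2) - 4 * (1 + 4 * Complex.I * (t:ℂ)) * (8 * (x:ℂ)))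
        / (1 + 4 * (x:ℂ) ^ 2 + 16 * (t:ℂ) ^ 2) ^ 2) (x:ℂ) :=
    (hasDerivAt_const _ _).div hden hne
  have h3 := ((hdiv.const_sub 1).mul_const (Complex.exp (2 * Complex.I * (t:ℂ)))).comp_ofReal
  simp only [uPer]
  convert h3 using 1
  simp only [uX, dd]; field_simp; ring

lemma hasDerivAt_uX_x (t x : ℝ) : HasDerivAt (fun y : ℝ => uX y t) (uXX x t) x := by
  have hden0 : HasDerivAt (fun z : ℂ => 1 + 4 * z ^ 2 + 16 * (t:ℂ) ^ 2) (8 * (x:ℂ)) (x:ℂ) := by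
    have h := (((hasDerivAt_pow 2 (x:ℂ)).const_mul (4:ℂ)).const_add 1).add_const (16 * (t:ℂ) ^ 2)
    exact h.congr_deriv (by norm_num; ring)
  have hden : HasDerivAt (fun z : ℂ => (1 + 4 * z ^ 2 + 16 * (t:ℂ) ^ 2)^2)
      (2 * (1 + 4 * (x:ℂ) ^ 2 + 16 * (t:ℂ) ^ 2) * (8 * (x:ℂ))) (x:ℂ) := by
    have := hden0.pow 2
    exact this.congr_deriv (by norm_num)
  have hne : (1 + 4 * (x:ℂ) ^ 2 + 16 * (t:ℂ) ^ 2) ≠ 0 := dd_ne x t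
  have hnum : HasDerivAt (fun z : ℂ => 32 * (1 + 4 * Complex.I * (t:ℂ)) * z)
      (32 * (1 + 4 * Complex.I * (t:ℂ))) (x:ℂ) := by
    simpa using (hasDerivAt_id (x:ℂ)).const_mul (32 * (1 + 4 * Complex.I * (t:ℂ)))
  have h3 := ((hnum.div hden (pow_ne_zero 2 hne)).mul_const
    (Complex.exp (2 * Complex.I * (t:ℂ)))).comp_ofReal
  simp only [uX, dd]
  refine h3.congr_deriv ?_
  simp only [uXX, dd]; field_simp; ring

lemma hasDerivAt_uPer_t (x t : ℝ) : HasDerivAt (fun τ : ℝ => uPer x τ) (uT x t) t := by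
  have hden : HasDerivAt (fun z : ℂ => 1 + 4 * (x:ℂ) ^ 2 + 16 * z ^ 2) (32 * (t:ℂ)) (t:ℂ) := by
    have h := ((hasDerivAt_pow 2 (t:ℂ)).const_mul (16:ℂ)).const_add (1 + 4 * (x:ℂ)^2)
    exact h.congr_deriv (by norm_num; ring)
  have hnum : HasDerivAt (fun z : ℂ => 4 * (1 + 4 * Complex.I * z)) (4 * (4 * Complex.I)) (t:ℂ) := by
    have h2 := (((hasDerivAt_id (t:ℂ)).const_mul (4*Complex.I)).const_add 1).const_mul 4
    exact h2.congr_deriv (by ring)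
  have hne : (1 + 4 * (x:ℂ) ^ 2 + 16 * (t:ℂ) ^ 2) ≠ 0 := dd_ne x t
  have hfac := (hnum.div hden hne).const_sub 1
  have hexp : HasDerivAt (fun z : ℂ => Complex.exp (2 * Complex.I * z))
      (2 * Complex.I * Complex.exp (2 * Complex.I * (t:ℂ))) (t:ℂ) := by
    have h := (((hasDerivAt_id (t:ℂ)).const_mul (2*Complex.I))).cexp
    simp only [id] at h
    exact h.congr_deriv (by ring)
  have h3 := (hfac.mul hexp).comp_ofReal
  simp only [uPer]
  refine h3.congr_deriv ?_
  simp only [uT, dd, Pi.div_apply]; field_simp; ring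

lemma conj_uPer (x t : ℝ) : (starRingEnd ℂ) (uPer x t) =
    (1 - 4 * (1 - 4 * Complex.I * (t:ℂ)) / dd x t) * (Complex.exp (2 * Complex.I * (t:ℂ)))⁻¹ := by
  rw [uPer, map_mul, ← Complex.exp_conj]
  simp only [dd, map_sub, map_div₀, map_add, map_one, map_ofNat, map_mul, Complex.conj_I,
    Complex.conj_ofReal, map_pow, map_one]
  rw [show (2:ℂ) * -Complex.I * (t:ℂ) = -(2 * Complex.I * t) by ring, Complex.exp_neg]
  ring

set_option maxHeartbeats 3000000 in
lemma uPer_nls (x t : ℝ) : uT x t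
    = Complex.I * (uXX x t + 2 * (uPer x t)^2 * (starRingEnd ℂ) (uPer x t)) := by
  have key : ∀ A B C D e : ℂ, e ≠ 0 → A = Complex.I*(B + 2*C^2*D) →
      A * e = Complex.I * ((B * e) + 2 * (C * e)^2 * (D * e⁻¹)) := by
    intro A B C D e he h
    subst h; field_simp
  rw [conj_uPer]
  simp only [uT, uXX, uPer, dd]
  apply key _ _ _ _ _ (Complex.exp_ne_zero _)
  have hne : (1 + 4 * (x:ℂ) ^ 2 + 16 * (t:ℂ) ^ 2) ≠ 0 := dd_ne x t
  have hI3 : Complex.I ^ 3 = -Complex.I := by rw [pow_succ, Complex.I_sq]; ring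
  have hI4 : Complex.I ^ 4 = 1 := by rw [show (4:ℕ) = 2+2 from rfl, pow_add, Complex.I_sq]; ring
  field_simp
  ring_nf
  simp only [Complex.I_sq, hI3, hI4]
  ring

/-! ### Norm bounds -/

lemma norm_dd (x t : ℝ) : ‖dd x t‖ = 1 + 4 * x ^ 2 + 16 * t ^ 2 := by
  rw [dd_eq, Complex.norm_real, Real.norm_eq_abs, abs_of_pos (dd_re_pos x t)]

lemma one_le_norm_dd (x t : ℝ) : 1 ≤ ‖dd x t‖ := by rw [norm_dd]; nlinarith

lemma norm_exp_It (t : ℝ) : ‖Complex.exp (2 * Complex.I * (t:ℂ))‖ = 1 := by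
  rw [Complex.norm_exp]
  simp

lemma norm_N_le (t : ℝ) : ‖(1 + 4 * Complex.I * (t:ℂ) : ℂ)‖ ≤ 1 + 4 * |t| := by
  refine (norm_add_le _ _).trans ?_
  simp [norm_mul]

lemma norm_fac_le (x t : ℝ) :
    ‖(1 - 4 * (1 + 4 * Complex.I * (t:ℂ)) / dd x t : ℂ)‖ ≤ 5 + 16 * |t| := by
  refine (norm_sub_le _ _).trans ?_
  have h1 : ‖(4 * (1 + 4 * Complex.I * (t:ℂ)) / dd x t : ℂ)‖ ≤ 4 * (1 + 4 * |t|) := by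
    rw [norm_div, norm_mul]
    have := norm_N_le t
    have h2 := one_le_norm_dd x t
    have h3 : ‖(4:ℂ)‖ = 4 := by norm_num
    rw [h3, div_le_iff₀ (by linarith)]
    nlinarith [norm_nonneg (1 + 4 * Complex.I * (t:ℂ))]
  simp only [norm_one]
  linarith

lemma norm_uPer_le (x t : ℝ) : ‖uPer x t‖ ≤ 5 + 16 * |t| := by
  rw [show uPer x t = (1 - 4 * (1 + 4 * Complex.I * (t:ℂ)) / dd x t) *
    Complex.exp (2 * Complex.I * (t:ℂ)) from rfl, norm_mul, norm_exp_It, mul_one]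
  exact norm_fac_le x t

lemma norm_uT_le (x t : ℝ) :
    ‖uT x t‖ ≤ 16 + 128 * ((1 + 4 * |t|) * |t|) + 2 * (5 + 16 * |t|) := by
  rw [uT, norm_mul, norm_exp_It, mul_one]
  refine (norm_add_le _ _).trans ?_
  have hdd := one_le_norm_dd x t
  have h1 : ‖(-16 * Complex.I / dd x t : ℂ)‖ ≤ 16 := by
    rw [norm_div]
    have h : ‖(-16 * Complex.I : ℂ)‖ = 16 := by simp
    rw [h, div_le_iff₀ (by linarith)]; nlinarith
  have h2 : ‖(128 * (1 + 4 * Complex.I * (t:ℂ)) * (t:ℂ) / (dd x t)^2 : ℂ)‖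
      ≤ 128 * ((1 + 4 * |t|) * |t|) := by
    rw [norm_div, norm_mul, norm_mul]
    have hN := norm_N_le t
    have h128 : ‖(128:ℂ)‖ = 128 := by norm_num
    have ht : ‖(t:ℂ)‖ = |t| := by simp
    have hd2 : (1:ℝ) ≤ ‖(dd x t)^2‖ := by rw [norm_pow]; nlinarith
    rw [h128, ht, div_le_iff₀ (by linarith)]
    have key : ‖(1 + 4 * Complex.I * (t:ℂ) : ℂ)‖ * |t| ≤ (1 + 4 * |t|) * |t| :=
      mul_le_mul_of_nonneg_right hN (abs_nonneg t)
    nlinarith [key, mul_nonneg (mul_nonneg (by positivity : (0:ℝ) ≤ 1 + 4*|t|) (abs_nonneg t))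
      (by linarith : (0:ℝ) ≤ ‖(dd x t)^2‖ - 1)]
  have h3 : ‖((1 - 4 * (1 + 4 * Complex.I * (t:ℂ)) / dd x t) * (2 * Complex.I) : ℂ)‖
      ≤ 2 * (5 + 16 * |t|) := by
    rw [norm_mul]
    have h : ‖(2 * Complex.I : ℂ)‖ = 2 := by simp
    rw [h]
    have := norm_fac_le x t
    nlinarith [norm_nonneg (1 - 4 * (1 + 4 * Complex.I * (t:ℂ)) / dd x t)]
  have := norm_add_le (-16 * Complex.I / dd x t)
    (128 * (1 + 4 * Complex.I * (t:ℂ)) * (t:ℂ) / (dd x t)^2)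
  linarith

lemma norm_uX_le (x t : ℝ) : ‖uX x t‖ ≤ 32 * (1 + 4 * |t|) := by
  rw [uX, norm_mul, norm_exp_It, mul_one, norm_div, norm_mul, norm_mul]
  have hN := norm_N_le t
  have h32 : ‖(32:ℂ)‖ = 32 := by norm_num
  have hx : ‖(x:ℂ)‖ = |x| := by simp
  have hdd := norm_dd x t
  have hxd : |x| ≤ ‖(dd x t)^2‖ := by
    rw [norm_pow, hdd]
    nlinarith [sq_nonneg (2*|x| - 1), _root_.sq_abs x, abs_nonneg x, sq_nonneg (4*x^2+16*t^2)]
  have hd2 : (0:ℝ) < ‖(dd x t)^2‖ := by rw [norm_pow, hdd]; positivity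
  rw [h32, hx, div_le_iff₀ hd2]
  nlinarith [norm_nonneg (1 + 4 * Complex.I * (t:ℂ)), abs_nonneg x]

/-! ### Continuity in x -/

lemma continuous_dd (t : ℝ) : Continuous fun x : ℝ => dd x t := by
  simp only [dd]
  fun_prop

lemma continuous_uPer (t : ℝ) : Continuous fun x : ℝ => uPer x t := by
  simp only [uPer]
  exact ((continuous_const.sub ((continuous_const.div (continuous_dd t) (fun x => dd_ne x t)))).mul
    continuous_const)

lemma continuous_uT (t : ℝ) : Continuous fun x : ℝ => uT x t := by
  simp only [uT]
  have h1 : Continuous fun x : ℝ => (-16 * Complex.I) / dd x t :=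
    continuous_const.div (continuous_dd t) (fun x => dd_ne x t)
  have h2 : Continuous fun x : ℝ => 128 * (1 + 4 * Complex.I * (t:ℂ)) * (t:ℂ) / (dd x t)^2 :=
    continuous_const.div ((continuous_dd t).pow 2) (fun x => pow_ne_zero 2 (dd_ne x t))
  have h3 : Continuous fun x : ℝ =>
      (1 - 4 * (1 + 4 * Complex.I * (t:ℂ)) / dd x t) * (2 * Complex.I) :=
    (continuous_const.sub (continuous_const.div (continuous_dd t) (fun x => dd_ne x t))).mul
      continuous_const
  exact ((h1.add h2).add h3).mul continuous_const

/-! ### Schwartz helpers -/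

lemma eval_cont (x : ℝ) : Continuous fun f : SchwartzMap ℝ ℂ => f x :=
  ((BoundedContinuousFunction.evalCLM ℂ x).comp
    (SchwartzMap.toBoundedContinuousFunctionCLM ℂ ℝ ℂ)).continuous

lemma schwartz_hasDerivAt (f : SchwartzMap ℝ ℂ) (x : ℝ) :
    HasDerivAt f (SchwartzMap.derivCLM ℝ ℂ f x) x := by
  simpa [SchwartzMap.derivCLM_apply] using f.differentiableAt.hasDerivAt

lemma schwartz_decay_bound (f : SchwartzMap ℝ ℂ) (x : ℝ) :
    ‖f x‖ ≤ (SchwartzMap.seminorm ℝ 0 0 f + SchwartzMap.seminorm ℝ 2 0 f) / (1 + x^2) := by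
  rw [le_div_iff₀ (by positivity)]
  have h0 := SchwartzMap.le_seminorm' ℝ 0 0 f x
  have h2 := SchwartzMap.le_seminorm' ℝ 2 0 f x
  simp only [iteratedDeriv_zero, pow_zero, one_mul, pow_two] at h0 h2
  nlinarith [_root_.sq_abs x, norm_nonneg (f x), abs_nonneg x]

lemma cont_seminorm (k n : ℕ) :
    Continuous (fun f : SchwartzMap ℝ ℂ => SchwartzMap.seminorm ℝ k n f) :=
  (schwartz_withSeminorms ℝ ℝ ℂ).continuous_seminorm (k, n)

lemma integrable_of_decay (f : ℝ → ℂ) (hf : AEStronglyMeasurable f volume) (C : ℝ)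
    (h : ∀ x, ‖f x‖ ≤ C / (1 + x^2)) : Integrable f := by
  apply Integrable.mono' (integrable_inv_one_add_sq.const_mul C) hf
  filter_upwards with x
  simpa [div_eq_mul_inv] using h x

lemma schwartz_tendsto_cocompact (f : SchwartzMap ℝ ℂ) :
    Filter.Tendsto (fun x => f x) (Filter.cocompact ℝ) (nhds 0) :=
  ZeroAtInftyContinuousMapClass.zero_at_infty f

lemma tendsto_sub_self (t : ℝ) :
    Filter.Tendsto (fun τ : ℝ => τ - t) (nhdsWithin t {t}ᶜ) (nhdsWithin 0 {0}ᶜ) := by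
  apply Filter.Tendsto.inf
  · simpa using (continuous_sub_right t).tendsto t
  · rw [Filter.tendsto_principal]
    rw [Filter.eventually_principal]
    exact fun τ hτ => by simpa [sub_eq_zero] using hτ

lemma hasDerivAt_V (V W : ℝ → SchwartzMap ℝ ℂ) (t : ℝ)
    (hC1 : Filter.Tendsto (fun h : ℝ => h⁻¹ • (V (t + h) - V t))
      (nhdsWithin 0 {0}ᶜ) (nhds (W t))) (x : ℝ) :
    HasDerivAt (fun τ : ℝ => (V τ) x) ((W t) x) t := by
  rw [hasDerivAt_iff_tendsto_slope]
  have h1 : Filter.Tendsto (fun h : ℝ => (h⁻¹ • (V (t + h) - V t)) x)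
      (nhdsWithin 0 {0}ᶜ) (nhds ((W t) x)) :=
    ((eval_cont x).tendsto _).comp hC1
  have h2 := h1.comp (tendsto_sub_self t)
  apply h2.congr'
  filter_upwards [self_mem_nhdsWithin] with τ hτ
  simp only [Function.comp, SchwartzMap.smul_apply, SchwartzMap.sub_apply,
    show t + (τ - t) = τ by ring]
  rw [slope_def_module]

lemma cont_V (V W : ℝ → SchwartzMap ℝ ℂ)
    (hC1 : ∀ t : ℝ, Filter.Tendsto (fun h : ℝ => h⁻¹ • (V (t + h) - V t))
      (nhdsWithin 0 {0}ᶜ) (nhds (W t))) : Continuous V := by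
  rw [continuous_iff_continuousAt]
  intro t
  have h1 : Filter.Tendsto (fun h : ℝ => h • (h⁻¹ • (V (t + h) - V t)))
      (nhdsWithin 0 {0}ᶜ) (nhds ((0:ℝ) • W t)) :=
    (Filter.tendsto_id.mono_left nhdsWithin_le_nhds).smul (hC1 t)
  have h2 : Filter.Tendsto (fun h : ℝ => V (t + h) - V t) (nhdsWithin 0 {0}ᶜ) (nhds 0) := by
    rw [zero_smul] at h1
    apply h1.congr'
    filter_upwards [self_mem_nhdsWithin] with h hh
    simp only [Set.mem_compl_iff, Set.mem_singleton_iff] at hh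
    rw [smul_smul, mul_inv_cancel₀ hh, one_smul]
  have hp : Filter.Tendsto (fun h : ℝ => V (t + h) - V t) (pure 0) (nhds 0) := by
    have := Filter.tendsto_pure_pure (fun h : ℝ => V (t + h) - V t) 0
    simp only [add_zero, sub_self] at this
    exact this.mono_right (pure_le_nhds _)
  have h3 : Filter.Tendsto (fun h : ℝ => V (t + h) - V t) (nhds 0) (nhds 0) := by
    rw [← nhdsNE_sup_pure 0, Filter.tendsto_sup]
    exact ⟨h2, hp⟩
  have h4 : Filter.Tendsto (fun h : ℝ => V (t + h)) (nhds 0) (nhds (V t)) := by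
    have := h3.add (tendsto_const_nhds (x := V t))
    simpa using this
  have h5 : Filter.Tendsto (fun τ : ℝ => τ - t) (nhds t) (nhds 0) := by
    simpa using (continuous_sub_right t).tendsto t
  exact (h4.comp h5).congr fun τ => by
    show V (t + (τ - t)) = V τ
    rw [show t + (τ - t) = τ by ring]

lemma ofReal_norm_sq (z : ℂ) : ((‖z‖^2 : ℝ) : ℂ) = z * (starRingEnd ℂ) z := by
  rw [Complex.mul_conj]
  norm_cast
  rw [Complex.normSq_eq_norm_sq]

end PeregrineAux

open PeregrineAux Complex Filter

set_option maxHeartbeats 2000000 in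
/-- Conserved quantity of the NLS equation linearized at the Peregrine breather:
if `v` is jointly smooth, for each `t` the function `x ↦ v(x,t)` is Schwartz,
`t ↦ v(·,t)` is a `C¹` curve in Schwartz space (differentiable with continuous
derivative `W` in the Schwartz topology), and `v` solves
`i v_t + v_xx + 4 |uPer|² v + 2 uPer² v̄ = 0`, then
`M(t) = ∫ (uPer v̄ + ūPer v) dx` is independent of `t`. -/
theorem linearized_NLS_conserved_quantity (v : ℝ → ℝ → ℂ)
    (V W : ℝ → SchwartzMap ℝ ℂ)
    (hsmooth : ContDiff ℝ (⊤ : ℕ∞) (fun p : ℝ × ℝ => v p.1 p.2))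
    (hV : ∀ t x : ℝ, V t x = v x t)
    (hC1 : ∀ t : ℝ,
      Filter.Tendsto (fun h : ℝ => h⁻¹ • (V (t + h) - V t))
        (nhdsWithin 0 {0}ᶜ) (nhds (W t)))
    (hWcont : Continuous W)
    (hlin : ∀ x t : ℝ,
      Complex.I * deriv (fun τ : ℝ => v x τ) t
        + deriv (deriv (fun y : ℝ => v y t)) x
        + 4 * (‖uPer x t‖ ^ 2 : ℝ) * v x t
        + 2 * (uPer x t) ^ 2 * (starRingEnd ℂ) (v x t) = 0) :
    ∀ t₁ t₂ : ℝ,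
      (∫ x : ℝ, (uPer x t₁ * (starRingEnd ℂ) (v x t₁)
          + (starRingEnd ℂ) (uPer x t₁) * v x t₁))
      = ∫ x : ℝ, (uPer x t₂ * (starRingEnd ℂ) (v x t₂)
          + (starRingEnd ℂ) (uPer x t₂) * v x t₂) := by
  intro t₁ t₂
  have hWder : ∀ t x : ℝ, HasDerivAt (fun τ : ℝ => v x τ) ((W t) x) t := by
    intro t x
    have := hasDerivAt_V V W t (hC1 t) x
    simpa only [hV] using this
  have key1 : ∀ t₀ : ℝ,
      Integrable (fun x => uT x t₀ * (starRingEnd ℂ) (v x t₀)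
        + uPer x t₀ * (starRingEnd ℂ) ((W t₀) x)
        + (starRingEnd ℂ) (uT x t₀) * v x t₀ + (starRingEnd ℂ) (uPer x t₀) * (W t₀) x) volume ∧
      HasDerivAt (fun t => ∫ x : ℝ, (uPer x t * (starRingEnd ℂ) (v x t)
        + (starRingEnd ℂ) (uPer x t) * v x t))
        (∫ x : ℝ, (uT x t₀ * (starRingEnd ℂ) (v x t₀)
          + uPer x t₀ * (starRingEnd ℂ) ((W t₀) x)
          + (starRingEnd ℂ) (uT x t₀) * v x t₀ + (starRingEnd ℂ) (uPer x t₀) * (W t₀) x)) t₀ := by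
    intro t₀
    have hvV : ∀ t : ℝ, (fun y : ℝ => v y t) = fun y => V t y := fun t =>
      funext fun y => (hV t y).symm
    have hvc : ∀ t : ℝ, Continuous fun x : ℝ => v x t := by
      intro t; rw [hvV t]; exact (V t).continuous
    -- uniform constants
    set a : ℝ := |t₀| + 1 with ha
    have ha0 : 0 ≤ a := by positivity
    set CP : ℝ := 5 + 16 * a with hCP
    set CT : ℝ := 16 + 128 * ((1 + 4 * a) * a) + 2 * (5 + 16 * a) with hCT
    have hCP0 : 0 ≤ CP := by rw [hCP]; positivity
    have hCT0 : 0 ≤ CT := by rw [hCT]; positivity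
    have hτa : ∀ τ ∈ Metric.ball t₀ 1, |τ| ≤ a := by
      intro τ hτ
      rw [Metric.mem_ball, Real.dist_eq] at hτ
      have h := abs_sub_abs_le_abs_sub τ t₀
      rw [ha]; linarith
    have hPb : ∀ (τ : ℝ), |τ| ≤ a → ∀ x : ℝ, ‖uPer x τ‖ ≤ CP := by
      intro τ hτ x
      refine (norm_uPer_le x τ).trans ?_
      rw [hCP]; linarith
    have hTb : ∀ (τ : ℝ), |τ| ≤ a → ∀ x : ℝ, ‖uT x τ‖ ≤ CT := by
      intro τ hτ x
      refine (norm_uT_le x τ).trans ?_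
      rw [hCT]
      nlinarith [abs_nonneg τ, mul_nonneg (sub_nonneg.2 hτ)
        (by positivity : (0:ℝ) ≤ 1 + 4 * (a + |τ|))]
    -- seminorm sup bounds
    set gV : ℝ → ℝ := fun τ => SchwartzMap.seminorm ℝ 0 0 (V τ) + SchwartzMap.seminorm ℝ 2 0 (V τ)
      with hgV
    set gW : ℝ → ℝ := fun τ => SchwartzMap.seminorm ℝ 0 0 (W τ) + SchwartzMap.seminorm ℝ 2 0 (W τ)
      with hgW
    have hgVc : Continuous gV :=
      ((cont_seminorm 0 0).comp (cont_V V W hC1)).add ((cont_seminorm 2 0).comp (cont_V V W hC1))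
    have hgWc : Continuous gW :=
      ((cont_seminorm 0 0).comp hWcont).add ((cont_seminorm 2 0).comp hWcont)
    obtain ⟨τV, -, hτV⟩ := isCompact_Icc.exists_isMaxOn
      (Set.nonempty_Icc.2 (by linarith : t₀ - 1 ≤ t₀ + 1)) hgVc.continuousOn
    obtain ⟨τW, -, hτW⟩ := isCompact_Icc.exists_isMaxOn
      (Set.nonempty_Icc.2 (by linarith : t₀ - 1 ≤ t₀ + 1)) hgWc.continuousOn
    set BV : ℝ := gV τV
    set BW : ℝ := gW τW
    have hball : Metric.ball t₀ 1 ⊆ Set.Icc (t₀-1) (t₀+1) := by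
      intro τ hτ
      rw [Metric.mem_ball, Real.dist_eq] at hτ
      obtain ⟨h1, h2⟩ := abs_lt.1 hτ
      exact ⟨by linarith, by linarith⟩
    have hVxb : ∀ τ ∈ Metric.ball t₀ 1, ∀ x : ℝ, ‖(V τ) x‖ ≤ BV / (1 + x^2) := by
      intro τ hτ x
      refine (schwartz_decay_bound (V τ) x).trans ?_
      gcongr
      · exact hτV (hball hτ)
    have hWxb : ∀ τ ∈ Metric.ball t₀ 1, ∀ x : ℝ, ‖(W τ) x‖ ≤ BW / (1 + x^2) := by
      intro τ hτ x
      refine (schwartz_decay_bound (W τ) x).trans ?_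
      gcongr
      · exact hτW (hball hτ)
    -- now apply the dominated-derivative theorem
    set K : ℝ := 2 * CT * BV + 2 * CP * BW with hK
    have hBV0 : 0 ≤ BV := by
      have h1 := hτV (hball (Metric.mem_ball_self one_pos))
      have h0 : 0 ≤ gV t₀ := add_nonneg (apply_nonneg _ _) (apply_nonneg _ _)
      exact h0.trans h1
    have hBW0 : 0 ≤ BW := by
      have h1 := hτW (hball (Metric.mem_ball_self one_pos))
      have h0 : 0 ≤ gW t₀ := add_nonneg (apply_nonneg _ _) (apply_nonneg _ _)
      exact h0.trans h1
    have norm4 : ∀ A B C D : ℂ, ‖A * (starRingEnd ℂ) B + C * (starRingEnd ℂ) D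
        + (starRingEnd ℂ) A * B + (starRingEnd ℂ) C * D‖ ≤ 2*‖A‖*‖B‖ + 2*‖C‖*‖D‖ := by
      intro A B C D
      have h1 := norm_add_le (A * (starRingEnd ℂ) B + C * (starRingEnd ℂ) D + (starRingEnd ℂ) A * B)
        ((starRingEnd ℂ) C * D)
      have h2 := norm_add_le (A * (starRingEnd ℂ) B + C * (starRingEnd ℂ) D) ((starRingEnd ℂ) A * B)
      have h3 := norm_add_le (A * (starRingEnd ℂ) B) (C * (starRingEnd ℂ) D)
      simp only [norm_mul, RCLike.norm_conj] at h1 h2 h3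
      nlinarith [norm_nonneg A, norm_nonneg B, norm_nonneg C, norm_nonneg D]
    have main := hasDerivAt_integral_of_dominated_loc_of_deriv_le (μ := volume)
      (F := fun t x => uPer x t * (starRingEnd ℂ) (v x t) + (starRingEnd ℂ) (uPer x t) * v x t)
      (F' := fun t x => uT x t * (starRingEnd ℂ) (v x t) + uPer x t * (starRingEnd ℂ) ((W t) x)
        + (starRingEnd ℂ) (uT x t) * v x t + (starRingEnd ℂ) (uPer x t) * (W t) x)
      (x₀ := t₀) (bound := fun x => K / (1 + x^2)) (Metric.ball_mem_nhds t₀ one_pos)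
      ?meas ?int ?meas' ?bnd ?bint ?diff
    · exact ⟨main.1, main.2⟩
    case meas =>
      filter_upwards with t
      apply Continuous.aestronglyMeasurable
      exact ((continuous_uPer t).mul (hvc t).star).add (((continuous_uPer t).star).mul (hvc t))
    case int =>
      apply integrable_of_decay _ ?_ (2 * CP * BV)
      · intro x
        have h1 : ‖uPer x t₀ * (starRingEnd ℂ) (v x t₀) + (starRingEnd ℂ) (uPer x t₀) * v x t₀‖
            ≤ 2 * ‖uPer x t₀‖ * ‖v x t₀‖ := by
          have := norm_add_le (uPer x t₀ * (starRingEnd ℂ) (v x t₀))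
            ((starRingEnd ℂ) (uPer x t₀) * v x t₀)
          simp only [norm_mul, RCLike.norm_conj] at this
          linarith
        have h2 : ‖v x t₀‖ ≤ BV / (1 + x^2) := by
          rw [← hV t₀ x]
          exact hVxb t₀ (Metric.mem_ball_self one_pos) x
        have h3 : ‖uPer x t₀‖ ≤ CP := hPb t₀ (hτa t₀ (Metric.mem_ball_self one_pos)) x
        have h4 : (0:ℝ) < 1 + x^2 := by positivity
        rw [show 2 * CP * BV / (1 + x^2) = 2 * CP * (BV / (1+x^2)) by ring]
        nlinarith [norm_nonneg (uPer x t₀), norm_nonneg (v x t₀), div_nonneg hBV0 h4.le]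
      · apply Continuous.aestronglyMeasurable
        exact ((continuous_uPer t₀).mul (hvc t₀).star).add (((continuous_uPer t₀).star).mul (hvc t₀))
    case meas' =>
      apply Continuous.aestronglyMeasurable
      refine (((continuous_uT t₀).mul (hvc t₀).star).add
        ((continuous_uPer t₀).mul (W t₀).continuous.star)).add
        (((continuous_uT t₀).star).mul (hvc t₀)) |>.add (((continuous_uPer t₀).star).mul (W t₀).continuous)
    case bnd =>
      filter_upwards with x
      intro τ hτ
      have hb := norm4 (uT x τ) (v x τ) (uPer x τ) ((W τ) x)
      refine hb.trans ?_
      have h2 : ‖v x τ‖ ≤ BV / (1 + x^2) := by rw [← hV τ x]; exact hVxb τ hτ x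
      have h3 : ‖(W τ) x‖ ≤ BW / (1 + x^2) := hWxb τ hτ x
      have h4 : ‖uT x τ‖ ≤ CT := hTb τ (hτa τ hτ) x
      have h5 : ‖uPer x τ‖ ≤ CP := hPb τ (hτa τ hτ) x
      have h6 : (0:ℝ) < 1 + x^2 := by positivity
      rw [hK, show (2 * CT * BV + 2 * CP * BW) / (1 + x^2)
        = 2 * CT * (BV / (1+x^2)) + 2 * CP * (BW / (1+x^2)) by ring]
      nlinarith [norm_nonneg (uT x τ), norm_nonneg (uPer x τ), norm_nonneg (v x τ),
        norm_nonneg ((W τ) x), div_nonneg hBV0 h6.le, div_nonneg hBW0 h6.le]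
    case bint =>
      have := (integrable_inv_one_add_sq.const_mul K)
      apply this.congr
      filter_upwards with x
      rw [div_eq_mul_inv]
    case diff =>
      filter_upwards with x
      intro τ hτ
      have h1 := (hasDerivAt_uPer_t x τ).mul ((hWder τ x).star)
      have h2 := ((hasDerivAt_uPer_t x τ).star).mul (hWder τ x)
      have h3 := h1.add h2
      refine h3.congr_deriv ?_
      simp only [starRingEnd_apply]
      ring
  have key2 : ∀ t₀ : ℝ,
      Integrable (fun x => uT x t₀ * (starRingEnd ℂ) (v x t₀)
        + uPer x t₀ * (starRingEnd ℂ) ((W t₀) x)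
        + (starRingEnd ℂ) (uT x t₀) * v x t₀ + (starRingEnd ℂ) (uPer x t₀) * (W t₀) x) volume →
      (∫ x : ℝ, (uT x t₀ * (starRingEnd ℂ) (v x t₀)
        + uPer x t₀ * (starRingEnd ℂ) ((W t₀) x)
        + (starRingEnd ℂ) (uT x t₀) * v x t₀ + (starRingEnd ℂ) (uPer x t₀) * (W t₀) x)) = 0 := by
    intro t₀ hint
    set φ : SchwartzMap ℝ ℂ := V t₀ with hφ
    set φ₁ : SchwartzMap ℝ ℂ := SchwartzMap.derivCLM ℝ ℂ φ with hφ₁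
    set φ₂ : SchwartzMap ℝ ℂ := SchwartzMap.derivCLM ℝ ℂ φ₁ with hφ₂
    have e1 : (fun y : ℝ => v y t₀) = fun y => φ y := funext fun y => (hV t₀ y).symm
    have e2 : deriv (fun y : ℝ => v y t₀) = fun y => φ₁ y := by
      rw [e1]; funext y
      rw [hφ₁, SchwartzMap.derivCLM_apply]
    have e3 : deriv (deriv (fun y : ℝ => v y t₀)) = fun y => φ₂ y := by
      rw [e2]; funext y
      rw [hφ₂, SchwartzMap.derivCLM_apply]
    -- the PDE rewritten
    have hWeq : ∀ x : ℝ, (W t₀) x = Complex.I * (φ₂ x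
        + 4 * (uPer x t₀ * (starRingEnd ℂ) (uPer x t₀)) * φ x
        + 2 * (uPer x t₀)^2 * (starRingEnd ℂ) (φ x)) := by
      intro x
      have h := hlin x t₀
      rw [(hWder t₀ x).deriv, e3, ofReal_norm_sq, ← hV t₀ x, ← hφ] at h
      simp only [] at h
      linear_combination (-Complex.I) * h + ((W t₀) x) * Complex.I_sq
    -- the flux function and its derivative
    set G : ℝ → ℂ := fun x => Complex.I * ((starRingEnd ℂ) (uPer x t₀) * φ₁ x
        - (starRingEnd ℂ) (uX x t₀) * φ x + uX x t₀ * (starRingEnd ℂ) (φ x)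
        - uPer x t₀ * (starRingEnd ℂ) (φ₁ x)) with hG
    set Gd : ℝ → ℂ := fun x => Complex.I * ((starRingEnd ℂ) (uPer x t₀) * φ₂ x
        - (starRingEnd ℂ) (uXX x t₀) * φ x + uXX x t₀ * (starRingEnd ℂ) (φ x)
        - uPer x t₀ * (starRingEnd ℂ) (φ₂ x)) with hGd
    have hGder : ∀ x : ℝ, HasDerivAt G (Gd x) x := by
      intro x
      have hu := hasDerivAt_uPer_x t₀ x
      have hux := hasDerivAt_uX_x t₀ x
      have hp := schwartz_hasDerivAt φ x
      have hp1 := schwartz_hasDerivAt φ₁ x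
      rw [← hφ₁] at hp
      rw [← hφ₂] at hp1
      have big := ((((hu.star.mul hp1).sub (hux.star.mul hp)).add (hux.mul hp.star)).sub
        (hu.mul hp1.star)).const_mul Complex.I
      refine big.congr_deriv ?_
      simp only [hGd, starRingEnd_apply]
      ring
    -- pointwise identity integrand = Gd
    have hFG : ∀ x : ℝ, uT x t₀ * (starRingEnd ℂ) (v x t₀)
        + uPer x t₀ * (starRingEnd ℂ) ((W t₀) x)
        + (starRingEnd ℂ) (uT x t₀) * v x t₀ + (starRingEnd ℂ) (uPer x t₀) * (W t₀) x = Gd x := by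
      intro x
      have hT := uPer_nls x t₀
      have hTc := congrArg (starRingEnd ℂ) hT
      have hWc := congrArg (starRingEnd ℂ) (hWeq x)
      simp only [map_mul, map_add, map_pow, map_ofNat, Complex.conj_I, Complex.conj_conj] at hTc hWc
      rw [← hV t₀ x, ← hφ, hTc, hT, hWc, hWeq x, hGd]
      ring
    -- integrability of Gd
    have hGdint : Integrable Gd volume := by
      apply hint.congr
      filter_upwards with x
      exact hFG x
    -- FTC on [-R, R]
    have h1 : ∀ R : ℝ, (∫ x in (-R)..R, Gd x) = G R - G (-R) := fun R =>
      intervalIntegral.integral_eq_sub_of_hasDerivAt (fun x _ => hGder x)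
        hGdint.intervalIntegrable
    have h2 : Filter.Tendsto (fun R : ℝ => ∫ x in (-R)..R, Gd x) Filter.atTop
        (nhds (∫ x : ℝ, Gd x)) :=
      MeasureTheory.intervalIntegral_tendsto_integral hGdint tendsto_neg_atTop_atBot tendsto_id
    -- G tends to zero at infinity
    have hGnorm : ∀ x : ℝ, ‖G x‖ ≤ 2 * (5 + 16*|t₀|) * ‖φ₁ x‖ + 2 * (32 * (1 + 4*|t₀|)) * ‖φ x‖ := by
      intro x
      rw [hG]
      simp only [norm_mul, Complex.norm_I, one_mul]
      have n1 := norm_sub_le ((starRingEnd ℂ) (uPer x t₀) * φ₁ x - (starRingEnd ℂ) (uX x t₀) * φ x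
        + uX x t₀ * (starRingEnd ℂ) (φ x)) (uPer x t₀ * (starRingEnd ℂ) (φ₁ x))
      have n2 := norm_add_le ((starRingEnd ℂ) (uPer x t₀) * φ₁ x - (starRingEnd ℂ) (uX x t₀) * φ x)
        (uX x t₀ * (starRingEnd ℂ) (φ x))
      have n3 := norm_sub_le ((starRingEnd ℂ) (uPer x t₀) * φ₁ x) ((starRingEnd ℂ) (uX x t₀) * φ x)
      simp only [norm_mul, RCLike.norm_conj] at n1 n2 n3
      have b1 := norm_uPer_le x t₀
      have b2 := norm_uX_le x t₀
      nlinarith [norm_nonneg (φ x), norm_nonneg (φ₁ x), norm_nonneg (uPer x t₀),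
        norm_nonneg (uX x t₀)]
    have hGcocompact : Filter.Tendsto G (Filter.cocompact ℝ) (nhds 0) := by
      apply squeeze_zero_norm hGnorm
      have l1 := (schwartz_tendsto_cocompact φ₁).norm
      have l2 := (schwartz_tendsto_cocompact φ).norm
      simp only [norm_zero] at l1 l2
      have := (l1.const_mul (2 * (5 + 16*|t₀|))).add (l2.const_mul (2 * (32 * (1 + 4*|t₀|))))
      simpa using this
    have hGtop : Filter.Tendsto G Filter.atTop (nhds 0) :=
      hGcocompact.mono_left (by rw [cocompact_eq_atBot_atTop]; exact le_sup_right)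
    have hGbot : Filter.Tendsto G Filter.atBot (nhds 0) :=
      hGcocompact.mono_left (by rw [cocompact_eq_atBot_atTop]; exact le_sup_left)
    have h3 : Filter.Tendsto (fun R : ℝ => G R - G (-R)) Filter.atTop (nhds 0) := by
      have := hGtop.sub (hGbot.comp tendsto_neg_atTop_atBot)
      simpa using this
    have h2' : Filter.Tendsto (fun R : ℝ => G R - G (-R)) Filter.atTop (nhds (∫ x : ℝ, Gd x)) :=
      h2.congr fun R => h1 R
    have hzero : (∫ x : ℝ, Gd x) = 0 := tendsto_nhds_unique h2' h3
    rw [← hzero]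
    exact integral_congr_ae (Filter.Eventually.of_forall hFG)
  have hM0 : ∀ t₀ : ℝ, HasDerivAt (fun t => ∫ x : ℝ, (uPer x t * (starRingEnd ℂ) (v x t)
      + (starRingEnd ℂ) (uPer x t) * v x t)) (0:ℂ) t₀ := by
    intro t₀
    obtain ⟨hi, hd⟩ := key1 t₀
    rwa [key2 t₀ hi] at hd
  exact is_const_of_deriv_eq_zero (fun t => (hM0 t).differentiableAt)
    (fun t => (hM0 t).deriv) t₁ t₂
end

section
/- Conservation of the modified energy: let κ = 1 and let u : ℝ × ℝ → ℂ be a jointly smooth solution of the focusing NLS equation such that for each t the function x ↦ u(x,t) − e^{2it} is a Schwartz function and t ↦ u(·,t) − e^{2it} is a C¹ curve in Schwartz space. Then the quantity E(t) = (1/2) ∫_ℝ ( |u_x(x,t)|² − |u(x,t)|² ( |u(x,t)|² − 1 ) ) dx is finite and independent of t. -/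
open MeasureTheory Complex Filter Topology

noncomputable section NLSaux

def NLSc (t : ℝ) : ℂ := Complex.exp (2 * Complex.I * t)
def NLSrp (z w : ℂ) : ℝ := z.re * w.re + z.im * w.im
def NLSip (z w : ℂ) : ℝ := z.re * w.im - z.im * w.re
def NLSQ (φ : SchwartzMap ℝ ℂ) : ℝ :=
  SchwartzMap.seminorm ℝ 0 0 φ + SchwartzMap.seminorm ℝ 2 0 φ

def NLSg (V : ℝ → SchwartzMap ℝ ℂ) (t x : ℝ) : ℝ :=
  Complex.normSq (SchwartzMap.derivCLM ℝ ℂ (V t) x)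
    - Complex.normSq (V t x + NLSc t) * (Complex.normSq (V t x + NLSc t) - 1)

def NLSF (V W : ℝ → SchwartzMap ℝ ℂ) (s x : ℝ) : ℝ :=
  2 * NLSrp (SchwartzMap.derivCLM ℝ ℂ (V s) x) (SchwartzMap.derivCLM ℝ ℂ (W s) x)
    - 2 * NLSrp (V s x + NLSc s) (W s x + 2 * Complex.I * NLSc s)
        * (2 * Complex.normSq (V s x + NLSc s) - 1)

def NLSG (V W : ℝ → SchwartzMap ℝ ℂ) (t x : ℝ) : ℝ :=
  2 * NLSrp (SchwartzMap.derivCLM ℝ ℂ (V t) x) (W t x + 2 * Complex.I * NLSc t)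
    - 2 * NLSip (V t x + NLSc t) (SchwartzMap.derivCLM ℝ ℂ (V t) x)

end NLSaux

/-- real part of conj z * w -/
lemma NLSrp_abs_le (z w : ℂ) : |NLSrp z w| ≤ ‖z‖ * ‖w‖ := by
  have h : NLSrp z w = ((starRingEnd ℂ) z * w).re := by
    simp [NLSrp, Complex.mul_re]
  rw [h]
  calc |((starRingEnd ℂ) z * w).re| ≤ ‖(starRingEnd ℂ) z * w‖ :=
        Complex.abs_re_le_norm _
    _ = ‖z‖ * ‖w‖ := by
        rw [norm_mul, Complex.norm_conj]

lemma NLSip_abs_le (z w : ℂ) : |NLSip z w| ≤ ‖z‖ * ‖w‖ := by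
  have h : NLSip z w = ((starRingEnd ℂ) z * w).im := by
    simp [NLSip, Complex.mul_im]; ring
  rw [h]
  calc |((starRingEnd ℂ) z * w).im| ≤ ‖(starRingEnd ℂ) z * w‖ :=
        Complex.abs_im_le_norm _
    _ = ‖z‖ * ‖w‖ := by
        rw [norm_mul, Complex.norm_conj]

lemma NLSrp_hasDerivAt {z w : ℝ → ℂ} {z' w' : ℂ} {t : ℝ}
    (hz : HasDerivAt z z' t) (hw : HasDerivAt w w' t) :
    HasDerivAt (fun s => NLSrp (z s) (w s)) (NLSrp z' (w t) + NLSrp (z t) w') t := by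
  have hzr : HasDerivAt (fun s => (z s).re) z'.re t :=
    Complex.reCLM.hasFDerivAt.comp_hasDerivAt t hz
  have hzi : HasDerivAt (fun s => (z s).im) z'.im t :=
    Complex.imCLM.hasFDerivAt.comp_hasDerivAt t hz
  have hwr : HasDerivAt (fun s => (w s).re) w'.re t :=
    Complex.reCLM.hasFDerivAt.comp_hasDerivAt t hw
  have hwi : HasDerivAt (fun s => (w s).im) w'.im t :=
    Complex.imCLM.hasFDerivAt.comp_hasDerivAt t hw
  have := (hzr.mul hwr).add (hzi.mul hwi)
  convert this using 1
  · rfl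
  · rfl
  · funext s; simp [NLSrp]
  simp [NLSrp]; ring

lemma NLSip_hasDerivAt {z w : ℝ → ℂ} {z' w' : ℂ} {t : ℝ}
    (hz : HasDerivAt z z' t) (hw : HasDerivAt w w' t) :
    HasDerivAt (fun s => NLSip (z s) (w s)) (NLSip z' (w t) + NLSip (z t) w') t := by
  have hzr : HasDerivAt (fun s => (z s).re) z'.re t :=
    Complex.reCLM.hasFDerivAt.comp_hasDerivAt t hz
  have hzi : HasDerivAt (fun s => (z s).im) z'.im t :=
    Complex.imCLM.hasFDerivAt.comp_hasDerivAt t hz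
  have hwr : HasDerivAt (fun s => (w s).re) w'.re t :=
    Complex.reCLM.hasFDerivAt.comp_hasDerivAt t hw
  have hwi : HasDerivAt (fun s => (w s).im) w'.im t :=
    Complex.imCLM.hasFDerivAt.comp_hasDerivAt t hw
  have := (hzr.mul hwi).sub (hzi.mul hwr)
  convert this using 1
  · rfl
  · rfl
  · funext s; simp [NLSip]
  simp [NLSip]; ring

lemma NLSnormSq_hasDerivAt {z : ℝ → ℂ} {z' : ℂ} {t : ℝ}
    (hz : HasDerivAt z z' t) :
    HasDerivAt (fun s => Complex.normSq (z s)) (2 * NLSrp (z t) z') t := by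
  have h := NLSrp_hasDerivAt hz hz
  have he : (fun s => Complex.normSq (z s)) = fun s => NLSrp (z s) (z s) := by
    funext s; simp [NLSrp, Complex.normSq_apply]
  rw [he]
  convert h using 1
  simp [NLSrp]; ring

lemma NLSc_hasDerivAt (t : ℝ) : HasDerivAt NLSc (2 * Complex.I * NLSc t) t := by
  have h1 : HasDerivAt (fun w : ℂ => Complex.exp (2 * Complex.I * w))
      (Complex.exp (2 * Complex.I * t) * (2 * Complex.I)) (t : ℂ) := by
    have := (Complex.hasDerivAt_exp (2 * Complex.I * t)).comp (t : ℂ)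
      ((hasDerivAt_id (t : ℂ)).const_mul (2 * Complex.I))
    simpa [Function.comp_def] using this
  have h2 := h1.comp_ofReal
  have he : NLSc = fun t : ℝ => Complex.exp (2 * Complex.I * (t:ℂ)) := rfl
  rw [he]
  convert h2 using 1
  ring

lemma NLSc_norm (t : ℝ) : ‖NLSc t‖ = 1 := by
  simp [NLSc, Complex.norm_exp]

lemma NLS_schwartz_hasDerivAt (φ : SchwartzMap ℝ ℂ) (x : ℝ) :
    HasDerivAt φ (SchwartzMap.derivCLM ℝ ℂ φ x) x := by
  have h := (φ.differentiable).differentiableAt (x := x)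
  simpa [SchwartzMap.derivCLM_apply] using h.hasDerivAt

lemma NLS_decay_bound (φ : SchwartzMap ℝ ℂ) (x : ℝ) :
    ‖φ x‖ ≤ (SchwartzMap.seminorm ℝ 0 0 φ + SchwartzMap.seminorm ℝ 2 0 φ) * (1 + x ^ 2)⁻¹ := by
  have h0 : ‖φ x‖ ≤ SchwartzMap.seminorm ℝ 0 0 φ := SchwartzMap.norm_le_seminorm ℝ φ x
  have h2 : ‖x‖ ^ 2 * ‖φ x‖ ≤ SchwartzMap.seminorm ℝ 2 0 φ :=
    SchwartzMap.norm_pow_mul_le_seminorm ℝ φ 2 x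
  have hx : ‖x‖ ^ 2 = x ^ 2 := by rw [Real.norm_eq_abs, _root_.sq_abs]
  rw [hx] at h2
  have he : (0:ℝ) < 1 + x ^ 2 := by positivity
  have key : ‖φ x‖ * (1 + x ^ 2) ≤
      SchwartzMap.seminorm ℝ 0 0 φ + SchwartzMap.seminorm ℝ 2 0 φ := by nlinarith
  calc ‖φ x‖ = ‖φ x‖ * (1 + x ^ 2) * (1 + x ^ 2)⁻¹ := by field_simp
    _ ≤ (SchwartzMap.seminorm ℝ 0 0 φ + SchwartzMap.seminorm ℝ 2 0 φ) * (1 + x ^ 2)⁻¹ :=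
        mul_le_mul_of_nonneg_right key (by positivity)

lemma NLS_curve_hasDerivAt {V W : ℝ → SchwartzMap ℝ ℂ}
    (hC1 : ∀ t : ℝ,
      Filter.Tendsto (fun h : ℝ => h⁻¹ • (V (t + h) - V t))
        (nhdsWithin 0 {0}ᶜ) (nhds (W t)))
    (L : SchwartzMap ℝ ℂ →L[ℝ] ℂ) (t : ℝ) :
    HasDerivAt (fun s => L (V s)) (L (W t)) t := by
  rw [hasDerivAt_iff_tendsto_slope_zero]
  have h := (L.continuous.tendsto (W t)).comp (hC1 t)
  have he : (fun h : ℝ => L (h⁻¹ • (V (t + h) - V t)))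
      = fun h : ℝ => h⁻¹ • (L (V (t + h)) - L (V t)) := by
    funext h; rw [_root_.map_smul, map_sub]
  rw [Function.comp_def, he] at h
  exact h

lemma NLS_curve_continuous {V W : ℝ → SchwartzMap ℝ ℂ}
    (hC1 : ∀ t : ℝ,
      Filter.Tendsto (fun h : ℝ => h⁻¹ • (V (t + h) - V t))
        (nhdsWithin 0 {0}ᶜ) (nhds (W t))) :
    Continuous V := by
  rw [continuous_iff_continuousAt]
  intro t
  have h1 : Tendsto (fun h : ℝ => V t + h • (h⁻¹ • (V (t + h) - V t)))
      (nhdsWithin 0 {0}ᶜ) (nhds (V t + (0:ℝ) • W t)) :=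
    tendsto_const_nhds.add ((tendsto_nhdsWithin_of_tendsto_nhds tendsto_id).smul (hC1 t))
  have h2 : Tendsto (fun h : ℝ => V (t + h)) (nhdsWithin 0 {0}ᶜ) (nhds (V t)) := by
    simp only [zero_smul, add_zero] at h1
    refine h1.congr' ?_
    filter_upwards [self_mem_nhdsWithin] with h hh
    rw [smul_inv_smul₀ (by simpa using hh)]
    abel
  have h3 : Tendsto (fun h : ℝ => V (t + h)) (nhds 0) (nhds (V t)) := by
    rw [← nhdsNE_sup_pure 0]
    rw [Filter.tendsto_sup]
    exact ⟨h2, by simpa using tendsto_pure_nhds (fun h : ℝ => V (t + h)) 0⟩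
  have h4 : Tendsto (fun s : ℝ => s - t) (nhds t) (nhds 0) := by
    have : ContinuousAt (fun s : ℝ => s - t) t := continuousAt_id.sub continuousAt_const
    simpa [ContinuousAt] using this
  have h5 := h3.comp h4
  have : ContinuousAt V t := by
    refine Tendsto.congr ?_ h5
    intro s; simp [Function.comp]
  exact this

lemma NLS_key_identity (u ud d : ℂ)
    (hd : d = -(Complex.I * ud) - 2 * (Complex.normSq u : ℂ) * u) :
    NLSrp d ud - NLSip u d = -(NLSrp u ud) * (2 * Complex.normSq u - 1) := by
  subst hd
  simp [NLSrp, NLSip, Complex.normSq_apply, Complex.mul_re, Complex.mul_im]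
  ring

-- rp bilinearity and special values
lemma NLSrp_add_left (a b w : ℂ) : NLSrp (a + b) w = NLSrp a w + NLSrp b w := by
  simp [NLSrp]; ring
lemma NLSrp_add_right (a b w : ℂ) : NLSrp w (a + b) = NLSrp w a + NLSrp w b := by
  simp [NLSrp]; ring
lemma NLSrp_self_I (z : ℂ) : NLSrp z (2 * Complex.I * z) = 0 := by
  simp [NLSrp, Complex.mul_re, Complex.mul_im]; ring

lemma NLSnormSq_add (z w : ℂ) :
    Complex.normSq (z + w) = Complex.normSq z + 2 * NLSrp z w + Complex.normSq w := by
  simp [Complex.normSq_apply, NLSrp]; ring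

lemma NLSnormSq_eq (z : ℂ) : Complex.normSq z = ‖z‖ ^ 2 := by
  rw [Complex.normSq_eq_norm_sq]

lemma NLS_gbound (a b cc : ℂ) (hc : ‖cc‖ = 1) (A B e : ℝ)
    (hA : 0 ≤ A) (hB : 0 ≤ B) (he : 0 < e) (he1 : e ≤ 1)
    (ha : ‖a‖ ≤ A * e) (hb : ‖b‖ ≤ B * e) :
    |Complex.normSq b - Complex.normSq (a + cc) * (Complex.normSq (a + cc) - 1)|
      ≤ (B * B + (1 + (A + 2) * A) * ((A + 2) * A)) * e := by
  have hcc : Complex.normSq cc = 1 := by rw [NLSnormSq_eq, hc]; norm_num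
  have hr : |NLSrp a cc| ≤ ‖a‖ := by
    have := NLSrp_abs_le a cc; rwa [hc, mul_one] at this
  have hna : 0 ≤ ‖a‖ := norm_nonneg _
  have hnb : 0 ≤ ‖b‖ := norm_nonneg _
  have hsq : Complex.normSq (a + cc) = ‖a‖ ^ 2 + 2 * NLSrp a cc + 1 := by
    rw [NLSnormSq_add, NLSnormSq_eq, hcc]
  set r := NLSrp a cc with hrdef
  set w : ℝ := ‖a‖ ^ 2 + 2 * r with hwdef
  have hexpr : Complex.normSq b - Complex.normSq (a + cc) * (Complex.normSq (a + cc) - 1)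
      = ‖b‖ ^ 2 - (w + 1) * w := by
    rw [NLSnormSq_eq b, hsq]; ring
  rw [hexpr]
  have hw2 : |w| ≤ (A + 2) * A * e := by
    have h1 : |w| ≤ ‖a‖ ^ 2 + 2 * |r| := by
      calc |w| ≤ |‖a‖ ^ 2| + |2 * r| := abs_add_le _ _
        _ = ‖a‖ ^ 2 + 2 * |r| := by rw [_root_.abs_of_nonneg (by positivity : (0:ℝ) ≤ ‖a‖^2), abs_mul]; norm_num
    nlinarith [mul_le_mul ha ha hna (by positivity : (0:ℝ) ≤ A * e)]
  have hw3 : |w| ≤ (A + 2) * A := by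
    have h4 : (A + 2) * A * e ≤ (A + 2) * A := by
      nlinarith [mul_nonneg (by linarith : (0:ℝ) ≤ A + 2) hA]
    linarith
  have hb2 : ‖b‖ ^ 2 ≤ B * (B * e) := by nlinarith [mul_le_mul hb hb hnb (by positivity : (0:ℝ) ≤ B * e)]
  calc |‖b‖ ^ 2 - (w + 1) * w| ≤ |‖b‖ ^ 2| + |(w + 1) * w| := abs_sub _ _
    _ = ‖b‖ ^ 2 + |w + 1| * |w| := by rw [_root_.abs_of_nonneg (by positivity : (0:ℝ) ≤ ‖b‖^2), abs_mul]
    _ ≤ B * (B * e) + (|w| + 1) * |w| := by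
        have := abs_add_le w 1
        have h0 : |w + 1| * |w| ≤ (|w| + 1) * |w| := by
          apply mul_le_mul_of_nonneg_right _ (abs_nonneg _)
          simpa using abs_add_le w 1
        nlinarith
    _ ≤ (B * B + (1 + (A + 2) * A) * ((A + 2) * A)) * e := by
        nlinarith [mul_le_mul (by linarith : |w| + 1 ≤ (A+2)*A + 1) hw2 (abs_nonneg w)
          (by positivity : (0:ℝ) ≤ (A+2)*A + 1), abs_nonneg w]

-- bound for F'
lemma NLS_F'bound (a b w q cc : ℂ) (hc : ‖cc‖ = 1) (M e : ℝ)
    (hM : 0 ≤ M) (he : 0 < e) (he1 : e ≤ 1)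
    (ha : ‖a‖ ≤ M * e) (hb : ‖b‖ ≤ M * e) (hw : ‖w‖ ≤ M * e) (hq : ‖q‖ ≤ M * e) :
    |2 * NLSrp b q - 2 * NLSrp (a + cc) (w + 2 * Complex.I * cc)
        * (2 * Complex.normSq (a + cc) - 1)|
      ≤ (2 * M * M + 2 * (M * M + 3 * M) * (2 * (M + 1) ^ 2 + 1)) * e := by
  have hna : 0 ≤ ‖a‖ := norm_nonneg _
  have h2Ic : ‖2 * Complex.I * cc‖ = 2 := by
    rw [norm_mul, norm_mul, hc, Complex.norm_I]; simp
  have hsplit : NLSrp (a + cc) (w + 2 * Complex.I * cc)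
      = NLSrp a w + NLSrp a (2 * Complex.I * cc) + NLSrp cc w := by
    rw [NLSrp_add_left, NLSrp_add_right, NLSrp_add_right, NLSrp_self_I]; ring
  have h1 : |NLSrp b q| ≤ (M * e) * M := by
    refine (NLSrp_abs_le b q).trans ?_
    have : ‖q‖ ≤ M := by nlinarith
    exact mul_le_mul hb this (norm_nonneg _) (by positivity)
  have h2 : |NLSrp (a + cc) (w + 2 * Complex.I * cc)| ≤ (M * M + 3 * M) * e := by
    rw [hsplit]
    have e1 : |NLSrp a w| ≤ (M * e) * M := by
      refine (NLSrp_abs_le a w).trans ?_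
      have : ‖w‖ ≤ M := by nlinarith
      exact mul_le_mul ha this (norm_nonneg _) (by positivity)
    have e2 : |NLSrp a (2 * Complex.I * cc)| ≤ (M * e) * 2 := by
      refine (NLSrp_abs_le a _).trans ?_
      rw [h2Ic]
      exact mul_le_mul_of_nonneg_right ha (by norm_num)
    have e3 : |NLSrp cc w| ≤ 1 * (M * e) := by
      refine (NLSrp_abs_le cc w).trans ?_
      rw [hc]
      exact mul_le_mul_of_nonneg_left hw (by norm_num)
    calc |NLSrp a w + NLSrp a (2 * Complex.I * cc) + NLSrp cc w|
        ≤ |NLSrp a w + NLSrp a (2 * Complex.I * cc)| + |NLSrp cc w| := abs_add_le _ _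
      _ ≤ |NLSrp a w| + |NLSrp a (2 * Complex.I * cc)| + |NLSrp cc w| := by
          have := abs_add_le (NLSrp a w) (NLSrp a (2 * Complex.I * cc)); linarith
      _ ≤ (M * M + 3 * M) * e := by nlinarith
  have h3 : |2 * Complex.normSq (a + cc) - 1| ≤ 2 * (M + 1) ^ 2 + 1 := by
    have hn : ‖a + cc‖ ≤ M + 1 := by
      refine (norm_add_le a cc).trans ?_
      rw [hc]; nlinarith
    have hns : Complex.normSq (a + cc) = ‖a + cc‖ ^ 2 := NLSnormSq_eq _
    have h0 : (0:ℝ) ≤ Complex.normSq (a + cc) := Complex.normSq_nonneg _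
    have hup : Complex.normSq (a + cc) ≤ (M + 1) ^ 2 := by
      rw [hns]; nlinarith [norm_nonneg (a + cc)]
    rw [abs_le]; constructor <;> nlinarith
  calc |2 * NLSrp b q - 2 * NLSrp (a + cc) (w + 2 * Complex.I * cc)
        * (2 * Complex.normSq (a + cc) - 1)|
      ≤ |2 * NLSrp b q| + |2 * NLSrp (a + cc) (w + 2 * Complex.I * cc)
        * (2 * Complex.normSq (a + cc) - 1)| := abs_sub _ _
    _ = 2 * |NLSrp b q| + 2 * (|NLSrp (a + cc) (w + 2 * Complex.I * cc)|
        * |2 * Complex.normSq (a + cc) - 1|) := by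
        rw [abs_mul, abs_mul, abs_mul]; norm_num; ring
    _ ≤ (2 * M * M + 2 * (M * M + 3 * M) * (2 * (M + 1) ^ 2 + 1)) * e := by
        have hprod : |NLSrp (a + cc) (w + 2 * Complex.I * cc)|
            * |2 * Complex.normSq (a + cc) - 1|
            ≤ ((M * M + 3 * M) * e) * (2 * (M + 1) ^ 2 + 1) :=
          mul_le_mul h2 h3 (abs_nonneg _) (by positivity)
        nlinarith

-- bound for G
lemma NLS_Gbound (a b w cc : ℂ) (hc : ‖cc‖ = 1) (M e : ℝ)
    (hM : 0 ≤ M) (he : 0 < e) (he1 : e ≤ 1)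
    (ha : ‖a‖ ≤ M * e) (hb : ‖b‖ ≤ M * e) (hw : ‖w‖ ≤ M * e) :
    |2 * NLSrp b (w + 2 * Complex.I * cc) - 2 * NLSip (a + cc) b|
      ≤ (2 * M * (M + 2) + 2 * (M + 1) * M) * e := by
  have h2Ic : ‖2 * Complex.I * cc‖ = 2 := by
    rw [norm_mul, norm_mul, hc, Complex.norm_I]; simp
  have h1 : |NLSrp b (w + 2 * Complex.I * cc)| ≤ (M * e) * (M + 2) := by
    refine (NLSrp_abs_le b _).trans ?_
    have : ‖w + 2 * Complex.I * cc‖ ≤ M + 2 := by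
      refine (norm_add_le _ _).trans ?_
      rw [h2Ic]; nlinarith
    exact mul_le_mul hb this (norm_nonneg _) (by positivity)
  have h2 : |NLSip (a + cc) b| ≤ (M + 1) * (M * e) := by
    refine (NLSip_abs_le _ _).trans ?_
    have hn : ‖a + cc‖ ≤ M + 1 := by
      refine (norm_add_le a cc).trans ?_
      rw [hc]; nlinarith
    exact mul_le_mul hn hb (norm_nonneg _) (by positivity)
  calc |2 * NLSrp b (w + 2 * Complex.I * cc) - 2 * NLSip (a + cc) b|
      ≤ |2 * NLSrp b (w + 2 * Complex.I * cc)| + |2 * NLSip (a + cc) b| := abs_sub _ _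
    _ = 2 * |NLSrp b (w + 2 * Complex.I * cc)| + 2 * |NLSip (a + cc) b| := by
        rw [abs_mul, abs_mul]; norm_num
    _ ≤ (2 * M * (M + 2) + 2 * (M + 1) * M) * e := by nlinarith

lemma NLSrp_continuous {α : Type*} [TopologicalSpace α] {f g : α → ℂ}
    (hf : Continuous f) (hg : Continuous g) :
    Continuous fun x => NLSrp (f x) (g x) := by
  unfold NLSrp
  exact ((Complex.continuous_re.comp hf).mul (Complex.continuous_re.comp hg)).add
    ((Complex.continuous_im.comp hf).mul (Complex.continuous_im.comp hg))

lemma NLSip_continuous {α : Type*} [TopologicalSpace α] {f g : α → ℂ}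
    (hf : Continuous f) (hg : Continuous g) :
    Continuous fun x => NLSip (f x) (g x) := by
  unfold NLSip
  exact ((Complex.continuous_re.comp hf).mul (Complex.continuous_im.comp hg)).sub
    ((Complex.continuous_im.comp hf).mul (Complex.continuous_re.comp hg))

lemma NLSQ_continuous : Continuous NLSQ := by
  have h1 := (schwartz_withSeminorms ℝ ℝ ℂ).continuous_seminorm (0, 0)
  have h2 := (schwartz_withSeminorms ℝ ℝ ℂ).continuous_seminorm (2, 0)
  exact h1.add h2

lemma NLSQ_nonneg (φ : SchwartzMap ℝ ℂ) : 0 ≤ NLSQ φ :=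
  add_nonneg (apply_nonneg _ _) (apply_nonneg _ _)

lemma NLS_decay_bound' (φ : SchwartzMap ℝ ℂ) (x : ℝ) :
    ‖φ x‖ ≤ NLSQ φ * (1 + x ^ 2)⁻¹ := NLS_decay_bound φ x

lemma NLS_e_pos (x : ℝ) : (0:ℝ) < (1 + x ^ 2)⁻¹ := by positivity

lemma NLS_e_le_one (x : ℝ) : (1 + x ^ 2)⁻¹ ≤ (1:ℝ) := by
  rw [inv_le_one_iff₀]
  right; nlinarith

set_option maxHeartbeats 1000000 in
/-- Conservation of the modified energy (with `κ = 1`): if `u` is a jointly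
smooth solution of the focusing NLS equation such that for each `t` the
function `x ↦ u(x,t) − exp(2it)` is a Schwartz function and `t ↦ u(·,t) − exp(2it)`
is a `C¹` curve in Schwartz space (differentiable with continuous derivative `W`
in the Schwartz topology), then
`E(t) = (1/2) ∫ (|u_x|² − |u|²(|u|² − 1)) dx` is finite and independent of `t`. -/
theorem NLS_modified_energy_conserved (u : ℝ → ℝ → ℂ)
    (V W : ℝ → SchwartzMap ℝ ℂ)
    (hsmooth : ContDiff ℝ (⊤ : ℕ∞) (fun p : ℝ × ℝ => u p.1 p.2))
    (hNLS : ∀ x t : ℝ,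
      Complex.I * deriv (fun τ : ℝ => u x τ) t
        + deriv (deriv (fun y : ℝ => u y t)) x
        + 2 * (‖u x t‖ ^ 2 : ℝ) * u x t = 0)
    (hV : ∀ t x : ℝ, V t x = u x t - Complex.exp (2 * Complex.I * (t : ℂ)))
    (hC1 : ∀ t : ℝ,
      Filter.Tendsto (fun h : ℝ => h⁻¹ • (V (t + h) - V t))
        (nhdsWithin 0 {0}ᶜ) (nhds (W t)))
    (hWcont : Continuous W) :
    (∀ t : ℝ, Integrable (fun x : ℝ =>
        ‖deriv (fun y : ℝ => u y t) x‖ ^ 2 - ‖u x t‖ ^ 2 * (‖u x t‖ ^ 2 - 1))) ∧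
    (∀ t₁ t₂ : ℝ,
      (1 / 2 : ℝ) * ∫ x : ℝ,
          (‖deriv (fun y : ℝ => u y t₁) x‖ ^ 2 - ‖u x t₁‖ ^ 2 * (‖u x t₁‖ ^ 2 - 1))
      = (1 / 2 : ℝ) * ∫ x : ℝ,
          (‖deriv (fun y : ℝ => u y t₂) x‖ ^ 2 - ‖u x t₂‖ ^ 2 * (‖u x t₂‖ ^ 2 - 1))) := by
  -- basic rewrites
  have hu : ∀ x t : ℝ, u x t = V t x + NLSc t := by
    intro x t
    have h := hV t x
    rw [h]; unfold NLSc; ring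
  have hux : ∀ t x : ℝ, deriv (fun y : ℝ => u y t) x = SchwartzMap.derivCLM ℝ ℂ (V t) x := by
    intro t x
    have hfe : (fun y : ℝ => u y t) = fun y => V t y + NLSc t := funext fun y => hu y t
    rw [hfe, deriv_add_const]
    exact (SchwartzMap.derivCLM_apply ℝ (V t) x).symm
  have huxx : ∀ t x : ℝ, deriv (deriv (fun y : ℝ => u y t)) x
      = SchwartzMap.derivCLM ℝ ℂ (SchwartzMap.derivCLM ℝ ℂ (V t)) x := by
    intro t x
    have hfe : deriv (fun y : ℝ => u y t) = fun y => SchwartzMap.derivCLM ℝ ℂ (V t) y :=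
      funext fun y => hux t y
    rw [hfe]
    exact (SchwartzMap.derivCLM_apply ℝ (SchwartzMap.derivCLM ℝ ℂ (V t)) x).symm
  have h1 : ∀ t x : ℝ, HasDerivAt (fun s => V s x) (W t x) t := fun t x =>
    NLS_curve_hasDerivAt hC1 ((BoundedContinuousFunction.evalCLM ℝ x).comp (SchwartzMap.toBoundedContinuousFunctionCLM ℝ ℝ ℂ)) t
  have h2 : ∀ t x : ℝ, HasDerivAt (fun s => SchwartzMap.derivCLM ℝ ℂ (V s) x)
      (SchwartzMap.derivCLM ℝ ℂ (W t) x) t := fun t x =>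
    NLS_curve_hasDerivAt hC1 (((BoundedContinuousFunction.evalCLM ℝ x).comp (SchwartzMap.toBoundedContinuousFunctionCLM ℝ ℝ ℂ)).comp (SchwartzMap.derivCLM ℝ ℂ)) t
  have hut : ∀ x t : ℝ, HasDerivAt (fun τ => u x τ) (W t x + 2 * Complex.I * NLSc t) t := by
    intro x t
    have hfe : (fun τ : ℝ => u x τ) = fun τ => V τ x + NLSc τ := funext fun τ => hu x τ
    rw [hfe]
    exact (h1 t x).add (NLSc_hasDerivAt t)
  -- NLS equation in the new variables
  have hd : ∀ t x : ℝ, SchwartzMap.derivCLM ℝ ℂ (SchwartzMap.derivCLM ℝ ℂ (V t)) x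
      = -(Complex.I * (W t x + 2 * Complex.I * NLSc t))
        - 2 * (Complex.normSq (V t x + NLSc t) : ℂ) * (V t x + NLSc t) := by
    intro t x
    have hn := hNLS x t
    rw [(hut x t).deriv, huxx t x] at hn
    have hns : (‖u x t‖ ^ 2 : ℝ) = Complex.normSq (V t x + NLSc t) := by
      rw [hu x t, Complex.sq_norm]
    rw [hns, hu x t] at hn
    linear_combination hn
  -- integrand rewrite
  have hg : ∀ t x : ℝ, ‖deriv (fun y : ℝ => u y t) x‖ ^ 2
      - ‖u x t‖ ^ 2 * (‖u x t‖ ^ 2 - 1) = NLSg V t x := by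
    intro t x
    rw [hux t x, hu x t,
      Complex.sq_norm, Complex.sq_norm]
    rfl
  -- integrability of NLSg
  have hgcont : ∀ t : ℝ, Continuous (fun x => NLSg V t x) := by
    intro t
    unfold NLSg
    have hc1 : Continuous fun x : ℝ => V t x + NLSc t :=
      (V t).continuous.add continuous_const
    exact (Complex.continuous_normSq.comp
        (SchwartzMap.continuous (SchwartzMap.derivCLM ℝ ℂ (V t)))).sub
      ((Complex.continuous_normSq.comp hc1).mul
        ((Complex.continuous_normSq.comp hc1).sub continuous_const))
  have hInt : ∀ t : ℝ, Integrable (fun x => NLSg V t x) := by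
    intro t
    set A := NLSQ (V t) with hA_def
    set B := NLSQ (SchwartzMap.derivCLM ℝ ℂ (V t)) with hB_def
    have hA : 0 ≤ A := NLSQ_nonneg _
    have hB : 0 ≤ B := NLSQ_nonneg _
    refine Integrable.mono'
      (integrable_inv_one_add_sq.const_mul (B * B + (1 + (A + 2) * A) * ((A + 2) * A)))
      ((hgcont t).aestronglyMeasurable) (Filter.Eventually.of_forall fun x => ?_)
    rw [Real.norm_eq_abs]
    exact NLS_gbound (V t x) (SchwartzMap.derivCLM ℝ ℂ (V t) x) (NLSc t) (NLSc_norm t)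
      A B _ hA hB (NLS_e_pos x) (NLS_e_le_one x)
      (NLS_decay_bound' (V t) x) (NLS_decay_bound' (SchwartzMap.derivCLM ℝ ℂ (V t)) x)
  -- continuity of the curves and seminorm bounds
  have hVcont : Continuous V := NLS_curve_continuous hC1
  have hDVcont : Continuous fun s => SchwartzMap.derivCLM ℝ ℂ (V s) :=
    (SchwartzMap.derivCLM ℝ ℂ).continuous.comp hVcont
  have hDWcont : Continuous fun s => SchwartzMap.derivCLM ℝ ℂ (W s) :=
    (SchwartzMap.derivCLM ℝ ℂ).continuous.comp hWcont
  set Φ : ℝ → ℝ := fun s => NLSQ (V s) + NLSQ (W s)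
    + NLSQ (SchwartzMap.derivCLM ℝ ℂ (V s)) + NLSQ (SchwartzMap.derivCLM ℝ ℂ (W s)) with hΦ_def
  have hΦcont : Continuous Φ :=
    (((NLSQ_continuous.comp hVcont).add (NLSQ_continuous.comp hWcont)).add
      (NLSQ_continuous.comp hDVcont)).add (NLSQ_continuous.comp hDWcont)
  -- the key derivative computation
  have key : ∀ t₀ : ℝ, HasDerivAt (fun t => ∫ x : ℝ, NLSg V t x) 0 t₀ := by
    intro t₀
    obtain ⟨s₁, hs₁J, hmax'⟩ := isCompact_Icc.exists_isMaxOn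
      (⟨t₀, by constructor <;> linarith⟩ : (Set.Icc (t₀ - 1) (t₀ + 1)).Nonempty)
      hΦcont.continuousOn
    have hmax : ∀ s ∈ Set.Icc (t₀ - 1) (t₀ + 1), Φ s ≤ Φ s₁ := fun s hs => hmax' hs
    set M := Φ s₁ with hM_def
    have hM0 : 0 ≤ M := by
      have := NLSQ_nonneg (V s₁)
      have := NLSQ_nonneg (W s₁)
      have := NLSQ_nonneg (SchwartzMap.derivCLM ℝ ℂ (V s₁))
      have := NLSQ_nonneg (SchwartzMap.derivCLM ℝ ℂ (W s₁))
      simp only [hM_def, hΦ_def]; linarith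
    -- uniform pointwise bounds for s in the interval
    have hbnd : ∀ s ∈ Set.Icc (t₀ - 1) (t₀ + 1), ∀ x : ℝ,
        ‖V s x‖ ≤ M * (1 + x ^ 2)⁻¹ ∧ ‖W s x‖ ≤ M * (1 + x ^ 2)⁻¹ ∧
        ‖SchwartzMap.derivCLM ℝ ℂ (V s) x‖ ≤ M * (1 + x ^ 2)⁻¹ ∧
        ‖SchwartzMap.derivCLM ℝ ℂ (W s) x‖ ≤ M * (1 + x ^ 2)⁻¹ := by
      intro s hs x
      have hΦs : Φ s ≤ M := hmax s hs
      have q1 := NLSQ_nonneg (V s)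
      have q2 := NLSQ_nonneg (W s)
      have q3 := NLSQ_nonneg (SchwartzMap.derivCLM ℝ ℂ (V s))
      have q4 := NLSQ_nonneg (SchwartzMap.derivCLM ℝ ℂ (W s))
      have hΦs' : NLSQ (V s) ≤ M ∧ NLSQ (W s) ≤ M ∧
          NLSQ (SchwartzMap.derivCLM ℝ ℂ (V s)) ≤ M ∧
          NLSQ (SchwartzMap.derivCLM ℝ ℂ (W s)) ≤ M := by
        simp only [hΦ_def] at hΦs
        refine ⟨by linarith, by linarith, by linarith, by linarith⟩
      have he : (0:ℝ) ≤ (1 + x ^ 2)⁻¹ := (NLS_e_pos x).le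
      exact ⟨(NLS_decay_bound' (V s) x).trans (mul_le_mul_of_nonneg_right hΦs'.1 he),
        (NLS_decay_bound' (W s) x).trans (mul_le_mul_of_nonneg_right hΦs'.2.1 he),
        (NLS_decay_bound' _ x).trans (mul_le_mul_of_nonneg_right hΦs'.2.2.1 he),
        (NLS_decay_bound' _ x).trans (mul_le_mul_of_nonneg_right hΦs'.2.2.2 he)⟩
    have hball : ∀ s ∈ Metric.ball t₀ (1:ℝ), s ∈ Set.Icc (t₀ - 1) (t₀ + 1) := by
      intro s hs
      rw [Metric.mem_ball, Real.dist_eq, abs_sub_lt_iff] at hs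
      exact ⟨by linarith [hs.1, hs.2], by linarith [hs.1, hs.2]⟩
    -- differentiation under the integral sign
    set K := 2 * M * M + 2 * (M * M + 3 * M) * (2 * (M + 1) ^ 2 + 1) with hK_def
    have hF'cont : Continuous fun x => NLSF V W t₀ x := by
      unfold NLSF
      have hc1 : Continuous fun x : ℝ => V t₀ x + NLSc t₀ :=
        (V t₀).continuous.add continuous_const
      have hc2 : Continuous fun x : ℝ => W t₀ x + 2 * Complex.I * NLSc t₀ :=
        (W t₀).continuous.add continuous_const
      exact (continuous_const.mul
          (NLSrp_continuous (SchwartzMap.continuous _) (SchwartzMap.continuous _))).sub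
        ((continuous_const.mul (NLSrp_continuous hc1 hc2)).mul
          ((continuous_const.mul (Complex.continuous_normSq.comp hc1)).sub continuous_const))
    have hDI := hasDerivAt_integral_of_dominated_loc_of_deriv_le (μ := volume)
      (F := fun s x => NLSg V s x) (F' := fun s x => NLSF V W s x)
      (bound := fun x => K * (1 + x ^ 2)⁻¹) (Metric.ball_mem_nhds t₀ one_pos)
      (Filter.Eventually.of_forall fun s => (hgcont s).aestronglyMeasurable)
      (hInt t₀) (hF'cont.aestronglyMeasurable)
      (Filter.Eventually.of_forall fun x => ?_)
      (integrable_inv_one_add_sq.const_mul K)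
      (Filter.Eventually.of_forall fun x => ?_)
    · -- conclude: derivative of the integral is ∫ NLSF V W t₀, and that integral is 0
      have hF'int : Integrable (fun x => NLSF V W t₀ x) := hDI.1
      have hGd : ∀ x : ℝ, HasDerivAt (fun y => NLSG V W t₀ y) (NLSF V W t₀ x) x := by
        intro x
        have hbx : HasDerivAt (fun y => SchwartzMap.derivCLM ℝ ℂ (V t₀) y)
            (SchwartzMap.derivCLM ℝ ℂ (SchwartzMap.derivCLM ℝ ℂ (V t₀)) x) x :=
          NLS_schwartz_hasDerivAt _ x
        have hwx : HasDerivAt (fun y => W t₀ y + 2 * Complex.I * NLSc t₀)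
            (SchwartzMap.derivCLM ℝ ℂ (W t₀) x) x :=
          (NLS_schwartz_hasDerivAt (W t₀) x).add_const _
        have hux' : HasDerivAt (fun y => V t₀ y + NLSc t₀)
            (SchwartzMap.derivCLM ℝ ℂ (V t₀) x) x :=
          (NLS_schwartz_hasDerivAt (V t₀) x).add_const _
        have hGder := ((NLSrp_hasDerivAt hbx hwx).const_mul 2).sub
          ((NLSip_hasDerivAt hux' hbx).const_mul 2)
        convert hGder using 1
        · rfl
        · rfl
        · rfl
        have hkey := NLS_key_identity (V t₀ x + NLSc t₀)
          (W t₀ x + 2 * Complex.I * NLSc t₀)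
          (SchwartzMap.derivCLM ℝ ℂ (SchwartzMap.derivCLM ℝ ℂ (V t₀)) x) (hd t₀ x)
        have hbb : NLSip (SchwartzMap.derivCLM ℝ ℂ (V t₀) x)
            (SchwartzMap.derivCLM ℝ ℂ (V t₀) x) = 0 := by simp [NLSip]; ring
        unfold NLSF
        linear_combination (-2 : ℝ) * hkey + 2 * hbb
      have ht₀J : t₀ ∈ Set.Icc (t₀ - 1) (t₀ + 1) := by constructor <;> linarith
      set C := 2 * M * (M + 2) + 2 * (M + 1) * M with hC_def
      have hGbd : ∀ x : ℝ, ‖NLSG V W t₀ x‖ ≤ C * (1 + x ^ 2)⁻¹ := by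
        intro x
        have hb := hbnd t₀ ht₀J x
        rw [Real.norm_eq_abs]
        exact NLS_Gbound (V t₀ x) (SchwartzMap.derivCLM ℝ ℂ (V t₀) x) (W t₀ x) (NLSc t₀)
          (NLSc_norm t₀) M _ hM0 (NLS_e_pos x) (NLS_e_le_one x) hb.1 hb.2.2.1 hb.2.1
      have hbd_top : Tendsto (fun x : ℝ => C * (1 + x ^ 2)⁻¹) atTop (𝓝 0) := by
        have hsq : Tendsto (fun x : ℝ => x ^ 2) atTop atTop :=
          tendsto_pow_atTop (by norm_num : (2:ℕ) ≠ 0)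
        have h1 : Tendsto (fun x : ℝ => 1 + x ^ 2) atTop atTop :=
          tendsto_atTop_add_const_left _ _ hsq
        have h2 := h1.inv_tendsto_atTop
        simpa using h2.const_mul C
      have hbd_bot : Tendsto (fun x : ℝ => C * (1 + x ^ 2)⁻¹) atBot (𝓝 0) := by
        have h0 : Tendsto (fun x : ℝ => x ^ 2) atBot atTop := by
          have h := (tendsto_pow_atTop (by norm_num : (2:ℕ) ≠ 0) :
            Tendsto (fun x : ℝ => x ^ 2) atTop atTop).comp tendsto_abs_atBot_atTop
          refine h.congr fun x => ?_
          simp [Function.comp, _root_.sq_abs]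
        have h1 : Tendsto (fun x : ℝ => 1 + x ^ 2) atBot atTop :=
          tendsto_atTop_add_const_left _ _ h0
        have h2 := h1.inv_tendsto_atTop
        simpa using h2.const_mul C
      have hGtop : Tendsto (fun x => NLSG V W t₀ x) atTop (𝓝 0) :=
        squeeze_zero_norm hGbd hbd_top
      have hGbot : Tendsto (fun x => NLSG V W t₀ x) atBot (𝓝 0) :=
        squeeze_zero_norm hGbd hbd_bot
      have hio := integral_Ioi_of_hasDerivAt_of_tendsto' (a := (0:ℝ))
        (fun x _ => hGd x) (hF'int.integrableOn) hGtop
      have hic := integral_Iic_of_hasDerivAt_of_tendsto' (a := (0:ℝ))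
        (fun x _ => hGd x) (hF'int.integrableOn) hGbot
      have hsplit := intervalIntegral.integral_Iic_add_Ioi (b := (0:ℝ)) (f := fun x => NLSF V W t₀ x)
        (hF'int.integrableOn) (hF'int.integrableOn)
      have hzero : ∫ x : ℝ, NLSF V W t₀ x = 0 := by
        rw [← hsplit, hio, hic]; ring
      rw [← hzero]
      exact hDI.2
    · -- the bound
      intro s hs
      have hb := hbnd s (hball s hs) x
      rw [Real.norm_eq_abs]
      exact NLS_F'bound (V s x) (SchwartzMap.derivCLM ℝ ℂ (V s) x) (W s x)
        (SchwartzMap.derivCLM ℝ ℂ (W s) x) (NLSc s) (NLSc_norm s) M _ hM0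
        (NLS_e_pos x) (NLS_e_le_one x) hb.1 hb.2.2.1 hb.2.1 hb.2.2.2
    · -- differentiability in t
      intro s _
      have hu' : HasDerivAt (fun s => V s x + NLSc s)
          (W s x + 2 * Complex.I * NLSc s) s := (h1 s x).add (NLSc_hasDerivAt s)
      have hDv := h2 s x
      have hder := (NLSnormSq_hasDerivAt hDv).sub
        ((NLSnormSq_hasDerivAt hu').mul ((NLSnormSq_hasDerivAt hu').sub_const 1))
      convert hder using 1
      · rfl
      unfold NLSF
      ring
  refine ⟨?_, ?_⟩
  · intro t
    have hfe : (fun x : ℝ => ‖deriv (fun y : ℝ => u y t) x‖ ^ 2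
        - ‖u x t‖ ^ 2 * (‖u x t‖ ^ 2 - 1)) = fun x => NLSg V t x := funext fun x => hg t x
    rw [hfe]
    exact hInt t
  · intro t₁ t₂
    have hconst := is_const_of_deriv_eq_zero
      (f := fun t => ∫ x : ℝ, NLSg V t x)
      (fun t => (key t).differentiableAt) (fun t => (key t).deriv) t₁ t₂
    simp only [hg]
    rw [hconst]
end

section
/- Characterization of the absolute spectrum: for λ ∈ ℂ, the quartic equation ν⁴ + 4ν² + λ² = 0 has a root ν ∈ ℂ with Re ν = 0 if and only if λ ∈ iℝ ∪ [−2, 2] (i.e. Re λ = 0, or Im λ = 0 and −2 ≤ Re λ ≤ 2). Consequently the absolute spectrum of the linearization at the asymptotic state coincides with its essential spectrum iℝ ∪ [−2, 2]. -/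
/-- For any real `s ≥ -4` there is a real `t` with `t⁴ - 4t² = s`. -/
lemma abs_spec_exists_t (s : ℝ) (hs : -4 ≤ s) : ∃ t : ℝ, t ^ 4 - 4 * t ^ 2 = s := by
  refine ⟨Real.sqrt (2 + Real.sqrt (4 + s)), ?_⟩
  have h4s : (0 : ℝ) ≤ 4 + s := by linarith
  have hr : (0 : ℝ) ≤ Real.sqrt (4 + s) := Real.sqrt_nonneg _
  have hroot : (0 : ℝ) ≤ 2 + Real.sqrt (4 + s) := by linarith
  have ht2 : (Real.sqrt (2 + Real.sqrt (4 + s))) ^ 2 = 2 + Real.sqrt (4 + s) :=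
    Real.sq_sqrt hroot
  have hsq : (Real.sqrt (4 + s)) ^ 2 = 4 + s := Real.sq_sqrt h4s
  have ht4 : (Real.sqrt (2 + Real.sqrt (4 + s))) ^ 4 = (2 + Real.sqrt (4 + s)) ^ 2 := by
    rw [show (Real.sqrt (2 + Real.sqrt (4 + s))) ^ 4
        = ((Real.sqrt (2 + Real.sqrt (4 + s))) ^ 2) ^ 2 by ring, ht2]
  rw [ht4, ht2]
  nlinarith [hsq]

/-- Characterization of the absolute spectrum: for `λ ∈ ℂ`, the quartic
`ν⁴ + 4ν² + λ² = 0` has a purely imaginary root `ν` if and only if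
`λ ∈ iℝ ∪ [−2, 2]`. Consequently the absolute spectrum of the linearization
at the asymptotic state coincides with its essential spectrum `iℝ ∪ [−2, 2]`. -/
theorem absolute_spectrum_characterization :
    (∀ lam : ℂ,
      (∃ nu : ℂ, nu.re = 0 ∧ nu ^ 4 + 4 * nu ^ 2 + lam ^ 2 = 0)
        ↔ (lam.re = 0 ∨ (lam.im = 0 ∧ -2 ≤ lam.re ∧ lam.re ≤ 2))) ∧
    {lam : ℂ | ∃ nu : ℂ, nu.re = 0 ∧ nu ^ 4 + 4 * nu ^ 2 + lam ^ 2 = 0}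
      = {lam : ℂ | lam.re = 0}
        ∪ {lam : ℂ | lam.im = 0 ∧ -2 ≤ lam.re ∧ lam.re ≤ 2} := by
  have main : ∀ lam : ℂ,
      (∃ nu : ℂ, nu.re = 0 ∧ nu ^ 4 + 4 * nu ^ 2 + lam ^ 2 = 0)
        ↔ (lam.re = 0 ∨ (lam.im = 0 ∧ -2 ≤ lam.re ∧ lam.re ≤ 2)) := by
    intro lam
    constructor
    · rintro ⟨nu, hre, heq⟩
      set t : ℝ := nu.im with ht
      have hnu : nu = (t : ℂ) * Complex.I := by
        apply Complex.ext <;> simp [hre, ht]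
      rw [hnu] at heq
      have E : lam ^ 2 = ((4 * t ^ 2 - t ^ 4 : ℝ) : ℂ) := by
        push_cast
        linear_combination heq - ((t:ℂ)^4 * (Complex.I^2 - 1) + 4 * (t:ℂ)^2) * Complex.I_sq
      have hRe := congrArg Complex.re E
      have hIm := congrArg Complex.im E
      rw [Complex.ofReal_re, pow_two, Complex.mul_re] at hRe
      rw [Complex.ofReal_im, pow_two, Complex.mul_im] at hIm
      rcases mul_eq_zero.mp (by linarith [hIm] : lam.re * lam.im = 0) with h | h
      · exact Or.inl h
      · refine Or.inr ⟨h, ?_, ?_⟩ <;>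
          nlinarith [sq_nonneg (t ^ 2 - 2), hRe, h, sq_nonneg (lam.re - 2),
            sq_nonneg (lam.re + 2)]
    · rintro (h | ⟨him, h1, h2⟩)
      · obtain ⟨t, ht⟩ := abs_spec_exists_t (lam.im ^ 2) (by nlinarith [sq_nonneg lam.im])
        refine ⟨(t : ℂ) * Complex.I, by simp, ?_⟩
        have hlam : lam = (lam.im : ℂ) * Complex.I := by
          apply Complex.ext <;> simp [h]
        rw [hlam]
        have htC : (t : ℂ) ^ 4 - 4 * (t : ℂ) ^ 2 = (lam.im : ℂ) ^ 2 := by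
          exact_mod_cast congrArg (Complex.ofReal) ht
        linear_combination htC
          + ((t:ℂ)^4 * (Complex.I^2 - 1) + 4 * (t:ℂ)^2 + ((lam.im:ℝ):ℂ)^2) * Complex.I_sq
      · obtain ⟨t, ht⟩ := abs_spec_exists_t (-(lam.re ^ 2)) (by nlinarith)
        refine ⟨(t : ℂ) * Complex.I, by simp, ?_⟩
        have hlam : lam = ((lam.re : ℝ) : ℂ) := by
          apply Complex.ext <;> simp [him]
        rw [hlam]
        have htC : (t : ℂ) ^ 4 - 4 * (t : ℂ) ^ 2 = -((lam.re : ℂ) ^ 2) := by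
          exact_mod_cast congrArg (Complex.ofReal) ht
        linear_combination htC
          + ((t:ℂ)^4 * (Complex.I^2 - 1) + 4 * (t:ℂ)^2) * Complex.I_sq
  refine ⟨main, ?_⟩
  ext lam
  simp only [Set.mem_setOf_eq, Set.mem_union]
  exact main lam
end

section
/- Splitting of the spatial roots off the spectrum: for every λ ∈ ℂ with λ ∉ iℝ ∪ [−2, 2], there exist ν₁, ν₂ ∈ ℂ with Re ν₁ ≥ Re ν₂ > 0 such that for all ν ∈ ℂ, ν⁴ + 4ν² + λ² = (ν − ν₁)(ν + ν₁)(ν − ν₂)(ν + ν₂); that is, the dispersion relation D(λ,ν) = λ² + ν²(ν² + 4) = 0 has exactly two roots (counted with multiplicity) with positive real part and two roots with negative real part, related by ν ↦ −ν. -/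
/-- Every complex number that is not a nonpositive real has a square root
with positive real part. -/
lemma sqrt_pos_re (w : ℂ) (hw : w.im ≠ 0) : ∃ s : ℂ, 0 < s.re ∧ s ^ 2 = w := by
  obtain ⟨s, hs⟩ := IsAlgClosed.exists_pow_nat_eq w (by norm_num : 0 < 2)
  rcases lt_trichotomy s.re 0 with h | h | h
  · exact ⟨-s, by simpa using h, by rw [neg_pow]; simpa using hs⟩
  · exfalso
    apply hw
    rw [← hs]
    simp [pow_two, Complex.mul_im, h]
  · exact ⟨s, h, hs⟩

/-- Splitting of the spatial roots off the spectrum: for every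
`λ ∉ iℝ ∪ [−2, 2]` there exist `ν₁, ν₂ ∈ ℂ` with `Re ν₁ ≥ Re ν₂ > 0` such that
`ν⁴ + 4ν² + λ² = (ν − ν₁)(ν + ν₁)(ν − ν₂)(ν + ν₂)` for all `ν ∈ ℂ`; i.e. the
dispersion relation `D(λ,ν) = λ² + ν²(ν² + 4) = 0` has exactly two roots
(with multiplicity) of positive real part and two of negative real part,
related by `ν ↦ −ν`. -/
theorem roots_split_off_spectrum (lam : ℂ)
    (hlam : ¬(lam.re = 0 ∨ (lam.im = 0 ∧ -2 ≤ lam.re ∧ lam.re ≤ 2))) :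
    ∃ nu₁ nu₂ : ℂ, 0 < nu₂.re ∧ nu₂.re ≤ nu₁.re ∧
      ∀ nu : ℂ, nu ^ 4 + 4 * nu ^ 2 + lam ^ 2
        = (nu - nu₁) * (nu + nu₁) * (nu - nu₂) * (nu + nu₂) := by
  push_neg at hlam
  obtain ⟨hre, him⟩ := hlam
  obtain ⟨r, hr⟩ := IsAlgClosed.exists_pow_nat_eq (4 - lam ^ 2) (by norm_num : 0 < 2)
  have hrim : r.im ≠ 0 := by
    intro h0
    have h1 : (r ^ 2).im = 0 := by simp [pow_two, Complex.mul_im, h0]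
    have h2 : (r ^ 2).re = r.re ^ 2 := by simp [pow_two, Complex.mul_re, h0]
    rw [hr] at h1 h2
    have him2 : (4 - lam ^ 2).im = -(2 * lam.re * lam.im) := by
      simp [pow_two, Complex.mul_im]; ring
    rw [him2] at h1
    have hlim : lam.im = 0 := by
      rcases mul_eq_zero.mp (by linarith [h1] : 2 * lam.re * lam.im = 0) with h | h
      · rcases mul_eq_zero.mp h with h | h
        · norm_num at h
        · exact absurd h hre
      · exact h
    have hre2 : (4 - lam ^ 2).re = 4 - lam.re ^ 2 := by
      simp [pow_two, Complex.mul_re, hlim]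
    rw [hre2] at h2
    have : 0 ≤ 4 - lam.re ^ 2 := by nlinarith [sq_nonneg r.re]
    have h4 : lam.re ^ 2 ≤ 4 := by linarith
    have h5 : -2 ≤ lam.re := by nlinarith
    have h6 := him hlim h5
    nlinarith
  have hw1 : (-2 + r : ℂ).im ≠ 0 := by simpa using hrim
  have hw2 : (-2 - r : ℂ).im ≠ 0 := by simpa using hrim
  obtain ⟨a, ha_pos, ha⟩ := sqrt_pos_re _ hw1
  obtain ⟨b, hb_pos, hb⟩ := sqrt_pos_re _ hw2
  have key : ∀ nu : ℂ, nu ^ 4 + 4 * nu ^ 2 + lam ^ 2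
      = (nu - a) * (nu + a) * (nu - b) * (nu + b) := by
    intro nu
    have : (nu - a) * (nu + a) * (nu - b) * (nu + b) = (nu ^ 2 - a ^ 2) * (nu ^ 2 - b ^ 2) := by ring
    rw [this, ha, hb]
    linear_combination hr
  rcases le_total a.re b.re with h | h
  · exact ⟨b, a, ha_pos, h, fun nu => (key nu).trans (by ring)⟩
  · exact ⟨a, b, hb_pos, h, fun nu => (key nu).trans (by ring)⟩
end
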